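/- Let χ: ℤ → ℂ be a nontrivial Dirichlet character mod N (or any N-periodic function with vanishing period sum). For real s with s > -1, the limit lim_{l→∞} (1/l) ∑_{k=1}^{l} (l+1-k)·χ(k)·k^{-s} exists (as a finite complex number). -/

import Mathlib

/-!
Put `a k = χ (k + 1)`, `A n = ∑_{k<n} a k` and `f k = (k + 1) ^ (-s)`. Since `a` is periodic with
zero period sum, `A` is periodic, so `z n = A (n + 1) - c`, with `c` the mean of `A` over a period,
has bounded partial sums. Summation by parts gives
`∑_{k≤n} f k a k = f (n + 1) z n + f 0 c - ∑_{k≤n} (f (k + 1) - f k) z k`.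
By the mean value theorem `f (k + 1) - f k = -s u k` with `u` antitone and, as `s > -1`, tending
to `0`. Hence the last sum converges by Dirichlet's test, and a second summation by parts shows
that the Cesàro means of `f (n + 1) z n` tend to `0`.
-/

open Filter Finset Topology Function

theorem exists_rpow_add_one_sub_rpow {x : ℝ} (hx : 0 < x) (p : ℝ) :
    ∃ ξ ∈ Set.Ioo x (x + 1), (x + 1) ^ p - x ^ p = p * ξ ^ (p - 1) := by
  have hderiv : ∀ y ∈ Set.Ioo x (x + 1), HasDerivAt (fun y : ℝ => y ^ p) (p * y ^ (p - 1)) y :=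
    fun y hy => Real.hasDerivAt_rpow_const (Or.inl (hx.trans hy.1).ne')
  have hcont : ContinuousOn (fun y : ℝ => y ^ p) (Set.Icc x (x + 1)) := fun y hy =>
    (Real.continuousAt_rpow_const y p (Or.inl (hx.trans_le hy.1).ne')).continuousWithinAt
  obtain ⟨ξ, hξ, h⟩ := exists_hasDerivAt_eq_slope _ _ (lt_add_one x) hcont hderiv
  exact ⟨ξ, hξ, by rw [h, add_sub_cancel_left, div_one]⟩

theorem exists_antitone_rpow_increments {p : ℝ} (hp : p < 1) :
    ∃ u : ℕ → ℝ, Antitone u ∧ Tendsto u atTop (𝓝 0) ∧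
      ∀ k : ℕ, ((k : ℝ) + 2) ^ p - ((k : ℝ) + 1) ^ p = p * u k := by
  choose ξ hξ hξeq using
    fun k : ℕ => exists_rpow_add_one_sub_rpow (x := (k : ℝ) + 1) (by positivity) p
  have hξpos : ∀ k, 0 < ξ k := fun k => lt_trans (by positivity) (hξ k).1
  refine ⟨fun k => ξ k ^ (p - 1), antitone_nat_of_succ_le fun k => ?_, ?_, fun k => ?_⟩
  · refine Real.rpow_le_rpow_of_nonpos (hξpos k) ?_ (by linarith)
    have hξk := (hξ k).2
    have hξsucc := (hξ (k + 1)).1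
    push_cast at hξsucc
    linarith
  · have hpow : Tendsto (fun k : ℕ => ((k : ℝ) + 1) ^ (p - 1)) atTop (𝓝 0) := by
      simpa [comp_def] using (tendsto_rpow_neg_atTop (y := 1 - p) (by linarith)).comp
        (tendsto_atTop_add_const_right atTop 1 tendsto_natCast_atTop_atTop)
    refine squeeze_zero (fun k => (Real.rpow_pos_of_pos (hξpos k) _).le) (fun k => ?_) hpow
    exact Real.rpow_le_rpow_of_nonpos (by positivity) (hξ k).1.le (by linarith)
  · rw [← hξeq k]
    ring_nf

theorem Antitone.monotone_or_antitone_const_mul {α : Type*} [Preorder α] {u : α → ℝ}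
    (hu : Antitone u) (p : ℝ) : Monotone (fun k => p * u k) ∨ Antitone (fun k => p * u k) :=
  (le_total p 0).imp hu.const_mul_of_nonpos hu.const_mul

theorem Function.Periodic.sum_range {M : Type*} [AddCommMonoid M] {N : ℕ} {a : ℕ → M}
    (ha : Periodic a N) (ha0 : ∑ i ∈ range N, a i = 0) :
    Periodic (fun n => ∑ i ∈ range n, a i) N := by
  intro n
  induction n with
  | zero => simpa using ha0
  | succ n ih =>
    dsimp only at ih ⊢
    rw [add_right_comm, sum_range_succ, ih, ha, sum_range_succ]

theorem Function.Periodic.exists_norm_le {E : Type*} [SeminormedAddCommGroup E] {N : ℕ}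
    (hN : N ≠ 0) {a : ℕ → E} (ha : Periodic a N) : ∃ M, ∀ n, ‖a n‖ ≤ M :=
  ⟨∑ i ∈ range N, ‖a i‖, fun n => ha.map_mod_nat n ▸
    single_le_sum (f := fun i => ‖a i‖) (fun _ _ => norm_nonneg _)
      (mem_range.2 (Nat.mod_lt n (Nat.pos_of_ne_zero hN)))⟩

theorem Function.Periodic.exists_norm_sum_partialSums_sub_le {E : Type*}
    [SeminormedAddCommGroup E] [Module ℝ E] {N : ℕ} (hN : N ≠ 0) {a : ℕ → E}
    (ha : Periodic a N) (ha0 : ∑ i ∈ range N, a i = 0) :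
    ∃ c M, ∀ n, ‖∑ i ∈ range n, (∑ j ∈ range (i + 1), a j - c)‖ ≤ M := by
  set c := (N : ℝ)⁻¹ • ∑ i ∈ range N, ∑ j ∈ range (i + 1), a j
  have hz : Periodic (fun i => ∑ j ∈ range (i + 1), a j - c) N := fun i => by
    simp only [add_right_comm i N 1, (ha.sum_range ha0) (i + 1)]
  have hz0 : ∑ i ∈ range N, (∑ j ∈ range (i + 1), a j - c) = 0 := by
    rw [sum_sub_distrib, sum_const, card_range, ← Nat.cast_smul_eq_nsmul ℝ, smul_smul,
      mul_inv_cancel₀ (Nat.cast_ne_zero.2 hN), one_smul, sub_self]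
  exact ⟨c, (hz.sum_range hz0).exists_norm_le hN⟩

theorem sum_range_sum_range_succ {R M : Type*} [Ring R] [AddCommGroup M] [Module R M]
    (b : ℕ → M) (l : ℕ) :
    ∑ n ∈ range l, ∑ k ∈ range (n + 1), b k = ∑ k ∈ range l, ((l : R) - k) • b k := by
  induction l with
  | zero => simp
  | succ l ih =>
    rw [sum_range_succ, ih, sum_range_succ (fun k => (((l + 1 : ℕ) : R) - k) • b k)]
    simp only [Nat.cast_succ, add_sub_right_comm _ (1 : R), add_smul, one_smul, sum_add_distrib,
      sub_self, zero_add]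
    rw [sum_range_succ, add_assoc]

section SummationByParts

variable {E : Type*} [NormedAddCommGroup E] [NormedSpace ℝ E]

theorem sum_range_smul_by_parts_sub_const (g : ℕ → ℝ) (a : ℕ → E) (c : E) (m : ℕ) :
    ∑ k ∈ range m, g k • a k = g m • (∑ k ∈ range m, a k - c) + g 0 • c
      - ∑ k ∈ range m, (g (k + 1) - g k) • (∑ j ∈ range (k + 1), a j - c) := by
  induction m with
  | zero => simp
  | succ m ih =>
    rw [sum_range_succ (fun k => g k • a k), ih,
      sum_range_succ (fun k => (g (k + 1) - g k) • (∑ j ∈ range (k + 1), a j - c)),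
      sum_range_succ a m]
    module

theorem norm_sum_range_smul_le {z : ℕ → E} {M : ℝ} (hz : ∀ n, ‖∑ i ∈ range n, z i‖ ≤ M)
    (g : ℕ → ℝ) (n : ℕ) :
    ‖∑ i ∈ range n, g i • z i‖ ≤ M * (|g 0| + 2 * ∑ i ∈ range n, |g (i + 1) - g i|) := by
  have hM : 0 ≤ M := (norm_nonneg _).trans (hz 0)
  have hgn : |g n| ≤ |g 0| + ∑ i ∈ range n, |g (i + 1) - g i| := by
    calc |g n| = |g 0 + ∑ i ∈ range n, (g (i + 1) - g i)| := by rw [sum_range_sub]; ring_nf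
      _ ≤ _ := (abs_add_le _ _).trans (by gcongr; exact abs_sum_le_sum_abs _ _)
  rw [sum_range_smul_by_parts_sub_const g z 0 n]
  simp only [sub_zero, smul_zero, add_zero]
  calc ‖g n • ∑ i ∈ range n, z i - ∑ k ∈ range n, (g (k + 1) - g k) • ∑ j ∈ range (k + 1), z j‖
      ≤ |g n| * M + ∑ k ∈ range n, |g (k + 1) - g k| * M := by
        refine (norm_sub_le _ _).trans (add_le_add ?_ ((norm_sum_le _ _).trans ?_))
        · rw [norm_smul, Real.norm_eq_abs]
          exact mul_le_mul_of_nonneg_left (hz n) (abs_nonneg _)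
        · refine sum_le_sum fun k _ => ?_
          rw [norm_smul, Real.norm_eq_abs]
          exact mul_le_mul_of_nonneg_left (hz (k + 1)) (abs_nonneg _)
    _ ≤ M * (|g 0| + 2 * ∑ i ∈ range n, |g (i + 1) - g i|) := by
        rw [← sum_mul]
        nlinarith

theorem tendsto_inv_smul_sum_range_smul_of_bounded {z : ℕ → E} {M : ℝ}
    (hz : ∀ n, ‖∑ i ∈ range n, z i‖ ≤ M) {g : ℕ → ℝ}
    (hg : Tendsto (fun k => g (k + 1) - g k) atTop (𝓝 0)) :
    Tendsto (fun n : ℕ => (n : ℝ)⁻¹ • ∑ i ∈ range n, g i • z i) atTop (𝓝 0) := by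
  have hvar : Tendsto (fun n : ℕ => (n : ℝ)⁻¹ * ∑ i ∈ range n, |g (i + 1) - g i|)
      atTop (𝓝 0) := by
    simpa using hg.abs.cesaro
  have hbound : Tendsto (fun n : ℕ => M * |g 0| * (n : ℝ)⁻¹
      + 2 * M * ((n : ℝ)⁻¹ * ∑ i ∈ range n, |g (i + 1) - g i|)) atTop (𝓝 0) := by
    simpa using (tendsto_inv_atTop_zero.comp tendsto_natCast_atTop_atTop).const_mul (M * |g 0|)
      |>.add (hvar.const_mul (2 * M))
  refine squeeze_zero_norm (fun n => ?_) hbound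
  rw [norm_smul, norm_inv, Real.norm_natCast]
  calc (n : ℝ)⁻¹ * ‖∑ i ∈ range n, g i • z i‖
      ≤ (n : ℝ)⁻¹ * (M * (|g 0| + 2 * ∑ i ∈ range n, |g (i + 1) - g i|)) :=
        mul_le_mul_of_nonneg_left (norm_sum_range_smul_le hz g n) (by positivity)
    _ = _ := by ring

theorem exists_tendsto_cesaro_partialSums_smul [CompleteSpace E] {a : ℕ → E} {c : E} {M : ℝ}
    (hM : ∀ n, ‖∑ i ∈ range n, (∑ j ∈ range (i + 1), a j - c)‖ ≤ M) {f : ℕ → ℝ}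
    (hf : Monotone (fun k => f (k + 1) - f k) ∨ Antitone (fun k => f (k + 1) - f k))
    (hf0 : Tendsto (fun k => f (k + 1) - f k) atTop (𝓝 0)) :
    ∃ L, Tendsto (fun l : ℕ => (l : ℝ)⁻¹ • ∑ n ∈ range l, ∑ k ∈ range (n + 1), f k • a k)
      atTop (𝓝 L) := by
  set z := fun i => ∑ j ∈ range (i + 1), a j - c
  set R := fun n => ∑ k ∈ range n, (f (k + 1) - f k) • z k
  obtain ⟨R₀, hR⟩ : ∃ R₀, Tendsto R atTop (𝓝 R₀) := cauchySeq_tendsto_of_complete <| by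
    rcases hf with hf | hf
    exacts [hf.cauchySeq_series_mul_of_tendsto_zero_of_bounded hf0 hM,
      hf.cauchySeq_series_mul_of_tendsto_zero_of_bounded hf0 hM]
  have hmain := tendsto_inv_smul_sum_range_smul_of_bounded (g := fun k => f (k + 1)) hM
    (hf0.comp (tendsto_add_atTop_nat 1))
  have hrest := (tendsto_const_nhds (x := f 0 • c)).sub (hR.comp (tendsto_add_atTop_nat 1))
    |>.cesaro_smul
  refine ⟨0 + (f 0 • c - R₀), (hmain.add hrest).congr fun l => ?_⟩
  simp only [sum_range_smul_by_parts_sub_const f a c, ← smul_add, ← sum_add_distrib, comp_apply,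
    add_sub_assoc, R, z]

end SummationByParts

/-- For an `N`-periodic `χ : ℤ → ℂ` with vanishing period sum and real `s > -1`, the Cesàro
means `(1/l) ∑_{k=1}^{l} (l+1-k)·χ(k)·k^{-s}` converge. -/
theorem cesaro_means_converge (N : ℕ) (hN : 0 < N) (χ : ℤ → ℂ)
    (hper : ∀ j : ℤ, χ (j + N) = χ j)
    (hsum : ∑ a ∈ Finset.range N, χ (a + 1) = 0)
    (s : ℝ) (hs : -1 < s) :
    ∃ L : ℂ, Tendsto (fun l : ℕ => (1 / (l : ℂ)) *
        ∑ k ∈ Finset.range l, ((l : ℂ) + 1 - ((k : ℂ) + 1)) * χ (k + 1)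
          * (((((k : ℝ) + 1) ^ (-s) : ℝ)) : ℂ))
      atTop (nhds L) := by
  set a : ℕ → ℂ := fun k => χ (k + 1)
  have ha : Periodic a N := fun k => by simpa [a, add_right_comm] using hper (k + 1)
  obtain ⟨c, M, hM⟩ := ha.exists_norm_sum_partialSums_sub_le hN.ne' hsum
  obtain ⟨u, hu, hu0, hfu⟩ := exists_antitone_rpow_increments (p := -s) (by linarith)
  set f : ℕ → ℝ := fun k => ((k : ℝ) + 1) ^ (-s)
  have hΔf : (fun k => f (k + 1) - f k) = fun k => -s * u k := by
    ext k
    rw [← hfu k]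
    simp only [f]
    push_cast
    ring_nf
  obtain ⟨L, hL⟩ := exists_tendsto_cesaro_partialSums_smul hM (f := f)
    (hΔf ▸ hu.monotone_or_antitone_const_mul (-s)) (hΔf ▸ by simpa using hu0.const_mul (-s))
  refine ⟨L, hL.congr fun l => ?_⟩
  rw [sum_range_sum_range_succ (R := ℝ), smul_sum, one_div, mul_sum]
  refine sum_congr rfl fun k _ => ?_
  rw [Complex.real_smul, Complex.real_smul, Complex.real_smul]
  push_cast
  ring
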